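/- Let A ∈ ℝ^{N×N} be a signed adjacency matrix that is structurally balanced with signature d, assume the underlying graph of A is connected, let L_s be its signed Laplacian, and let k > 0. Then for every initial state x₀ ∈ ℝ^N, the solution x(t) = exp(−k t L_s) x₀ of ẋ = −k L_s x satisfies lim_{t→∞} x(t) = ((dᵀ x₀)/N) d; in particular the agents achieve bipartite consensus: all components of x(t) converge to values of equal modulus |dᵀ x₀|/N, with x_i(t) → (dᵀ x₀/N) d_i. -/

import Mathlib

/-!
For a balanced signature `d`, `|a_ij| d_i d_j = a_ij`, so the quadratic form of the signed Laplacian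
is `2 xᵀ L x = ∑ |a_ij| (d_i x_i - d_j x_j)²`. Hence `L` is positive semidefinite and, the graph
being connected, its kernel is the line through `d`. Diagonalising `L = U diag(μ) Uᵀ` with `μ ≥ 0`,
`exp (-t L) = U diag(e^{-t μ}) Uᵀ` tends to the orthogonal projection onto `ker L`, which sends `x₀`
to `(dᵀ x₀ / dᵀ d) d`; finally `dᵀ d = N`.
-/

open Matrix Filter Topology Unitary

namespace Matrix.IsHermitian

variable {n : Type*} [Fintype n] [DecidableEq n] {L : Matrix n n ℝ} (hL : L.IsHermitian)

lemma exp_smul_eq (s : ℝ) :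
    NormedSpace.exp (s • L) = conjStarAlgAut ℝ _ hL.eigenvectorUnitary
      (diagonal fun i => Real.exp (s * hL.eigenvalues i)) := by
  have hinv := (inv_eq_left_inv (coe_star_mul_self hL.eigenvectorUnitary)).symm
  conv_lhs => rw [hL.spectral_theorem, ← map_smul, conjStarAlgAut_apply, hinv,
    exp_conj _ _ isUnit_coe, ← hinv, ← conjStarAlgAut_apply (S := ℝ), ← diagonal_smul, exp_diagonal]
  congr 2
  funext i
  simp [Real.exp_eq_exp_ℝ]

noncomputable def kerProj : Matrix n n ℝ :=
  conjStarAlgAut ℝ _ hL.eigenvectorUnitary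
    (diagonal fun i => if hL.eigenvalues i = 0 then 1 else 0)

lemma mul_kerProj : L * hL.kerProj = 0 := by
  nth_rw 1 [hL.spectral_theorem]
  rw [kerProj, ← map_mul, diagonal_mul_diagonal]
  convert map_zero (conjStarAlgAut ℝ _ hL.eigenvectorUnitary)
  ext i j
  by_cases h : hL.eigenvalues i = 0 <;> simp [diagonal_apply, h]

/-- The junk value `0⁻¹ = 0` makes `μ⁻¹ * μ` exactly the indicator of `μ ≠ 0`. -/
lemma one_sub_kerProj :
    1 - hL.kerProj = conjStarAlgAut ℝ _ hL.eigenvectorUnitary (diagonal hL.eigenvalues⁻¹) * L := by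
  conv_rhs => arg 2; rw [hL.spectral_theorem]
  rw [kerProj, ← map_one (conjStarAlgAut ℝ _ hL.eigenvectorUnitary), ← map_sub, ← map_mul,
    diagonal_mul_diagonal, ← diagonal_one, diagonal_sub]
  congr 2
  funext i
  by_cases h : hL.eigenvalues i = 0 <;> simp [h]

lemma kerProj_mulVec_of_mulVec_eq_zero {z : n → ℝ} (hz : L *ᵥ z = 0) : hL.kerProj *ᵥ z = z := by
  have h := congrArg (· *ᵥ z) hL.one_sub_kerProj
  simp only [sub_mulVec, one_mulVec, ← mulVec_mulVec, hz, mulVec_zero, sub_eq_zero] at h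
  exact h.symm

lemma isSymm_kerProj : hL.kerProj.IsSymm := by
  rw [← isHermitian_iff_isSymm, IsHermitian, ← star_eq_conjTranspose, kerProj, ← map_star,
    star_eq_conjTranspose, diagonal_conjTranspose, star_trivial]

lemma kerProj_mulVec_eq_smul {d : n → ℝ} (hLd : L *ᵥ d = 0)
    (hker : ∀ z, L *ᵥ z = 0 → ∃ c : ℝ, z = c • d) (x : n → ℝ) :
    hL.kerProj *ᵥ x = (d ⬝ᵥ x / (d ⬝ᵥ d)) • d := by
  obtain ⟨c, hc⟩ := hker (hL.kerProj *ᵥ x) (by rw [mulVec_mulVec, hL.mul_kerProj, zero_mulVec])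
  have hdx : d ⬝ᵥ (hL.kerProj *ᵥ x) = d ⬝ᵥ x := by
    rw [dotProduct_mulVec, ← mulVec_transpose, hL.isSymm_kerProj.eq,
      hL.kerProj_mulVec_of_mulVec_eq_zero hLd]
  rcases eq_or_ne d 0 with rfl | hd
  · simpa using hc
  · rw [hc, dotProduct_smul, smul_eq_mul] at hdx
    rw [hc, ← hdx, mul_div_cancel_right₀ _ (dotProduct_self_eq_zero.not.mpr hd)]

end Matrix.IsHermitian

lemma Real.tendsto_exp_neg_mul_atTop {μ : ℝ} (hμ : 0 ≤ μ) :
    Tendsto (fun t => Real.exp (-t * μ)) atTop (𝓝 (if μ = 0 then 1 else 0)) := by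
  rcases hμ.eq_or_lt with rfl | hμ
  · simp
  · rw [if_neg hμ.ne']
    exact Real.tendsto_exp_atBot.comp (tendsto_neg_atTop_atBot.atBot_mul_const hμ)

namespace Matrix.PosSemidef

variable {n : Type*} [Fintype n] [DecidableEq n] {L : Matrix n n ℝ}

lemma tendsto_exp_neg_smul (hL : L.PosSemidef) :
    Tendsto (fun t : ℝ => NormedSpace.exp ((-t) • L)) atTop (𝓝 hL.1.kerProj) := by
  simp only [hL.1.exp_smul_eq, IsHermitian.kerProj]
  have hcont : Continuous fun v : n → ℝ =>
      conjStarAlgAut ℝ _ hL.1.eigenvectorUnitary (diagonal v) := by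
    simp only [conjStarAlgAut_apply]
    fun_prop
  exact (hcont.tendsto _).comp
    (tendsto_pi_nhds.mpr fun i => Real.tendsto_exp_neg_mul_atTop (hL.eigenvalues_nonneg i))

lemma tendsto_exp_neg_smul_mulVec (hL : L.PosSemidef) {d : n → ℝ} (hLd : L *ᵥ d = 0)
    (hker : ∀ z, L *ᵥ z = 0 → ∃ c : ℝ, z = c • d) (x : n → ℝ) :
    Tendsto (fun t : ℝ => NormedSpace.exp ((-t) • L) *ᵥ x) atTop
      (𝓝 ((d ⬝ᵥ x / (d ⬝ᵥ d)) • d)) := by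
  rw [← hL.1.kerProj_mulVec_eq_smul hLd hker]
  exact ((continuous_id.matrix_mulVec continuous_const).tendsto _).comp hL.tendsto_exp_neg_smul

end Matrix.PosSemidef

lemma SimpleGraph.Reachable.eq_of_forall_adj {V α : Type*} {G : SimpleGraph V} {f : V → α}
    (hf : ∀ u v, G.Adj u v → f u = f v) {u v : V} (h : G.Reachable u v) : f u = f v := by
  obtain ⟨w⟩ := h
  induction w with
  | nil => rfl
  | cons hadj _ ih => exact (hf _ _ hadj).trans ih

namespace Matrix

variable {n : Type*}

structure IsStructurallyBalanced (A : Matrix n n ℝ) (d : n → ℝ) : Prop where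
  sign : ∀ i, d i = 1 ∨ d i = -1
  nonneg : ∀ i j, 0 ≤ d i * A i j * d j

namespace IsStructurallyBalanced

variable {A : Matrix n n ℝ} {d : n → ℝ}

lemma mul_self_eq_one (hSB : A.IsStructurallyBalanced d) (i : n) : d i * d i = 1 :=
  mul_self_eq_one_iff.mpr (hSB.sign i)

lemma abs_mul_mul_eq (hSB : A.IsStructurallyBalanced d) (i j : n) :
    |A i j| * (d i * d j) = A i j := by
  have h := hSB.nonneg i j
  rcases hSB.sign i with hi | hi <;> rcases hSB.sign j with hj | hj <;> rw [hi, hj] at h ⊢ <;>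
    simp at h ⊢ <;> simp [abs_of_nonpos, h]

end IsStructurallyBalanced

variable [Fintype n] [DecidableEq n]

/-- For `A` with zero diagonal this is the entrywise `(L_s)ᵢᵢ = ∑ₖ |aᵢₖ|`, `(L_s)ᵢⱼ = -aᵢⱼ`. -/
noncomputable def signedLaplacian (A : Matrix n n ℝ) : Matrix n n ℝ :=
  diagonal (fun i => ∑ j, |A i j|) - A

variable {A : Matrix n n ℝ}

lemma signedLaplacian_mulVec_apply (x : n → ℝ) (i : n) :
    (signedLaplacian A *ᵥ x) i = ∑ j, (|A i j| * x i - A i j * x j) := by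
  rw [signedLaplacian, sub_mulVec, Pi.sub_apply, mulVec_diagonal, Finset.sum_sub_distrib,
    ← Finset.sum_mul]
  rfl

lemma isHermitian_signedLaplacian (hA : A.IsSymm) : (signedLaplacian A).IsHermitian :=
  isHermitian_iff_isSymm.mpr ((isSymm_diagonal _).sub hA)

namespace IsStructurallyBalanced

variable {d : n → ℝ}

lemma two_mul_dotProduct_signedLaplacian_mulVec (hSB : A.IsStructurallyBalanced d) (hA : A.IsSymm)
    (x : n → ℝ) :
    2 * (x ⬝ᵥ (signedLaplacian A *ᵥ x)) = ∑ i, ∑ j, |A i j| * (d i * x i - d j * x j) ^ 2 := by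
  have hterm : ∀ i j, |A i j| * (d i * x i - d j * x j) ^ 2 =
      x i * (|A i j| * x i - A i j * x j) + x j * (|A j i| * x j - A j i * x i) := by
    intro i j
    rw [hA.apply i j]
    linear_combination (x i ^ 2 * |A i j|) * hSB.mul_self_eq_one i +
      (x j ^ 2 * |A i j|) * hSB.mul_self_eq_one j - (2 * x i * x j) * hSB.abs_mul_mul_eq i j
  simp only [hterm, Finset.sum_add_distrib, dotProduct, signedLaplacian_mulVec_apply,
    Finset.mul_sum, two_mul]
  rw [Finset.sum_comm (f := fun i j => x j * _)]

lemma posSemidef_signedLaplacian (hSB : A.IsStructurallyBalanced d) (hA : A.IsSymm) :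
    (signedLaplacian A).PosSemidef := by
  refine .of_dotProduct_mulVec_nonneg (isHermitian_signedLaplacian hA) fun x => ?_
  have hsum : 0 ≤ ∑ i, ∑ j, |A i j| * (d i * x i - d j * x j) ^ 2 := by positivity
  rw [star_trivial]
  linarith [hSB.two_mul_dotProduct_signedLaplacian_mulVec hA x]

lemma signedLaplacian_mulVec_eq_zero_iff (hSB : A.IsStructurallyBalanced d) (hA : A.IsSymm)
    {z : n → ℝ} :
    signedLaplacian A *ᵥ z = 0 ↔ ∀ i j, A i j ≠ 0 → d i * z i = d j * z j := by
  rw [← (hSB.posSemidef_signedLaplacian hA).dotProduct_mulVec_zero_iff, star_trivial,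
    ← mul_eq_zero_iff_left two_ne_zero, hSB.two_mul_dotProduct_signedLaplacian_mulVec hA]
  have hnonneg : ∀ i j, 0 ≤ |A i j| * (d i * z i - d j * z j) ^ 2 := fun _ _ => by positivity
  rw [Fintype.sum_eq_zero_iff_of_nonneg fun i => Finset.sum_nonneg fun j _ => hnonneg i j]
  refine funext_iff.trans (forall_congr' fun i => ?_)
  rw [Pi.zero_apply, Fintype.sum_eq_zero_iff_of_nonneg (hnonneg i)]
  refine funext_iff.trans (forall_congr' fun j => ?_)
  rw [Pi.zero_apply, mul_eq_zero, abs_eq_zero, sq_eq_zero_iff, sub_eq_zero, or_iff_not_imp_left]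

lemma signedLaplacian_mulVec_signature (hSB : A.IsStructurallyBalanced d) (hA : A.IsSymm) :
    signedLaplacian A *ᵥ d = 0 :=
  (hSB.signedLaplacian_mulVec_eq_zero_iff hA).mpr fun i j _ => by
    rw [hSB.mul_self_eq_one i, hSB.mul_self_eq_one j]

lemma exists_eq_smul_of_signedLaplacian_mulVec_eq_zero (hSB : A.IsStructurallyBalanced d)
    (hA : A.IsSymm) (hconn : (SimpleGraph.fromRel fun i j => A i j ≠ 0).Connected)
    {z : n → ℝ} (hz : signedLaplacian A *ᵥ z = 0) : ∃ c : ℝ, z = c • d := by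
  have hadj := (hSB.signedLaplacian_mulVec_eq_zero_iff hA).mp hz
  obtain ⟨i₀⟩ := hconn.nonempty
  refine ⟨d i₀ * z i₀, funext fun i => ?_⟩
  have hi : d i * z i = d i₀ * z i₀ := by
    refine (hconn.preconnected i i₀).eq_of_forall_adj (f := fun i => d i * z i) ?_
    rintro u v ⟨-, huv | hvu⟩
    exacts [hadj u v huv, (hadj v u hvu).symm]
  rw [Pi.smul_apply, smul_eq_mul, ← hi]
  linear_combination (-z i) * hSB.mul_self_eq_one i

end IsStructurallyBalanced

end Matrix

/-- For a structurally balanced signed adjacency matrix `A` with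
signature `d`, connected underlying graph, signed Laplacian `L`, and `k > 0`, the
solution `x(t) = exp(-k t L) x₀` of `ẋ = -k L x` converges to `((dᵀ x₀)/N) d`: the
agents achieve bipartite consensus. -/
theorem bipartite_consensus_SB
    (N : ℕ) (A : Matrix (Fin N) (Fin N) ℝ)
    (hsym : A.IsSymm) (hdiag : ∀ i, A i i = 0)
    (d : Fin N → ℝ) (hd : ∀ i, d i = 1 ∨ d i = -1)
    (hbal : ∀ i j, 0 ≤ d i * A i j * d j)
    (hconn : (SimpleGraph.fromRel (fun i j : Fin N => A i j ≠ 0)).Connected)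
    (L : Matrix (Fin N) (Fin N) ℝ)
    (hL : ∀ i j, L i j = if i = j then ∑ k, |A i k| else -A i j)
    (k : ℝ) (hk : 0 < k) (x₀ : Fin N → ℝ) :
    Filter.Tendsto (fun t : ℝ => NormedSpace.exp ((-(k * t)) • L) *ᵥ x₀)
      Filter.atTop (nhds (((d ⬝ᵥ x₀) / (N : ℝ)) • d)) := by
  have hSB : A.IsStructurallyBalanced d := ⟨hd, hbal⟩
  have hLA : L = signedLaplacian A := by
    ext i j
    rw [hL]
    by_cases h : i = j
    · subst h
      simp [signedLaplacian, hdiag]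
    · simp [signedLaplacian, h]
  have hdd : d ⬝ᵥ d = N := by simp [dotProduct, hSB.mul_self_eq_one]
  subst hLA
  rw [← hdd]
  exact ((hSB.posSemidef_signedLaplacian hsym).tendsto_exp_neg_smul_mulVec
    (hSB.signedLaplacian_mulVec_signature hsym)
    (fun _ => hSB.exists_eq_smul_of_signedLaplacian_mulVec_eq_zero hsym hconn) x₀).comp
    (tendsto_id.const_mul_atTop hk)
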